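/- Let θ₁, …, θ_d be real numbers such that max(‖kθ₁‖,…,‖kθ_d‖) ≥ C|k|^{-ν} for all nonzero integers k. For s ∈ ℕ define θ̃_s = θ₁ + sθ₂ + … + s^{d-1}θ_d. Then for any p ≥ d there exists C' > 0 such that for all distinct indices i₁,…,i_d ≤ p and all nonzero integers k, max(‖kθ̃_{i₁}‖, …, ‖kθ̃_{i_d}‖) ≥ C'|k|^{-ν}. -/

import Mathlib

/-- Distance from a real number to the nearest integer. -/
noncomputable def distNearestInt (x : ℝ) : ℝ := |x - round x|

/-!
Let `M` be the integer Vandermonde matrix of the distinct nodes `i₁, …, i_d`, so that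
`θ̃ = M θ`. Then `adj M · θ̃ = det M · θ`, hence `(k det M) θ_j` is an integer combination of
the numbers `k θ̃_{i_a}`. Since `‖·‖` is subadditive and `‖n x‖ ≤ |n| ‖x‖`, the hypothesis
applied to `k det M` bounds `max_a ‖k θ̃_{i_a}‖` from below by
`C |det M|^{-ν} |k|^{-ν} / (1 + Σ_{j,b} |(adj M)_{jb}|)`. There are finitely many tuples of
nodes in `[1, p]`, so one constant serves for all of them.
-/

open Filter Topology Matrix

lemma distNearestInt_eq_norm (x : ℝ) : distNearestInt x = ‖(x : UnitAddCircle)‖ :=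
  UnitAddCircle.norm_eq.symm

lemma distNearestInt_nonneg (x : ℝ) : 0 ≤ distNearestInt x := abs_nonneg _

lemma distNearestInt_sum_intCast_mul_le {ι : Type*} (s : Finset ι) (c : ι → ℤ) (x : ι → ℝ) :
    distNearestInt (∑ a ∈ s, c a * x a) ≤ ∑ a ∈ s, |(c a : ℝ)| * distNearestInt (x a) := by
  have hcoe : ((∑ a ∈ s, c a * x a : ℝ) : UnitAddCircle) =
      ∑ a ∈ s, c a • (x a : UnitAddCircle) := by
    simp
  simp only [distNearestInt_eq_norm, hcoe, ← Int.norm_eq_abs]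
  exact (norm_sum_le _ _).trans (Finset.sum_le_sum fun a _ => norm_zsmul_le _ _)

lemma Matrix.adjugate_mulVec_mulVec {n R : Type*} [Fintype n] [DecidableEq n] [CommRing R]
    (M : Matrix n n R) (v : n → R) : M.adjugate *ᵥ (M *ᵥ v) = M.det • v := by
  rw [mulVec_mulVec, adjugate_mul, smul_mulVec, one_mulVec]

lemma Matrix.intCast_det_mul_eq_sum_adjugate_mul {n : Type*} [Fintype n] [DecidableEq n]
    (M : Matrix n n ℤ) (θ : n → ℝ) (j : n) :
    (M.det : ℝ) * θ j = ∑ b, (M.adjugate j b : ℝ) * (M.map ((↑) : ℤ → ℝ) *ᵥ θ) b := by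
  have h := congrFun (((Int.castRingHom ℝ).mapMatrix M).adjugate_mulVec_mulVec θ) j
  rw [← RingHom.map_adjugate, ← RingHom.map_det] at h
  simpa only [mulVec, dotProduct, Pi.smul_apply, smul_eq_mul, RingHom.mapMatrix_apply, map_apply,
    Int.coe_castRingHom] using h.symm

def DiophantineWith {ι : Type*} (C ν : ℝ) (θ : ι → ℝ) : Prop :=
  ∀ k : ℤ, k ≠ 0 → ∃ i, C * |(k : ℝ)| ^ (-ν) ≤ distNearestInt (k * θ i)

namespace DiophantineWith

variable {ι : Type*} {C ν : ℝ} {θ : ι → ℝ}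

lemma mono {c : ℝ} (h : DiophantineWith C ν θ) (hc : c ≤ C) : DiophantineWith c ν θ :=
  fun k hk => (h k hk).imp fun _ hi => (mul_le_mul_of_nonneg_right hc (by positivity)).trans hi

lemma eventually_nhdsGT (h : DiophantineWith C ν θ) (hC : 0 < C) :
    ∀ᶠ c in 𝓝[>] 0, DiophantineWith c ν θ :=
  mem_of_superset (Ioo_mem_nhdsGT hC) fun _ hc => h.mono hc.2.le

theorem intMatrix_mulVec [Fintype ι] [DecidableEq ι] (h : DiophantineWith C ν θ) (hC : 0 < C)
    {M : Matrix ι ι ℤ} (hM : M.det ≠ 0) :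
    ∃ C' > 0, DiophantineWith C' ν (M.map ((↑) : ℤ → ℝ) *ᵥ θ) := by
  set A : ℝ := 1 + ∑ j, ∑ b, |(M.adjugate j b : ℝ)|
  have hA : 0 < A := by positivity
  refine ⟨C * |(M.det : ℝ)| ^ (-ν) / A, by positivity, fun k hk => ?_⟩
  set y := M.map ((↑) : ℤ → ℝ) *ᵥ θ
  obtain ⟨j, hj⟩ := h (k * M.det) (mul_ne_zero hk hM)
  have hcomb : ((k * M.det : ℤ) : ℝ) * θ j = ∑ b, M.adjugate j b * (k * y b) := by
    rw [Int.cast_mul, mul_assoc, M.intCast_det_mul_eq_sum_adjugate_mul, Finset.mul_sum]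
    exact Finset.sum_congr rfl fun b _ => by ring
  obtain ⟨a, -, ha⟩ := Finset.univ.exists_max_image (fun a => distNearestInt (k * y a))
    ⟨j, Finset.mem_univ j⟩
  have hrow : ∑ b, |(M.adjugate j b : ℝ)| ≤ A :=
    (Finset.single_le_sum (f := fun j => ∑ b, |(M.adjugate j b : ℝ)|)
      (fun _ _ => by positivity) (Finset.mem_univ j)).trans (le_add_of_nonneg_left zero_le_one)
  refine ⟨a, ?_⟩
  rw [div_mul_eq_mul_div, div_le_iff₀ hA]
  calc C * |(M.det : ℝ)| ^ (-ν) * |(k : ℝ)| ^ (-ν) = C * |((k * M.det : ℤ) : ℝ)| ^ (-ν) := by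
        push_cast
        rw [abs_mul, Real.mul_rpow (abs_nonneg _) (abs_nonneg _)]
        ring
    _ ≤ distNearestInt (((k * M.det : ℤ) : ℝ) * θ j) := hj
    _ ≤ ∑ b, |(M.adjugate j b : ℝ)| * distNearestInt (k * y b) := by
        rw [hcomb]
        exact distNearestInt_sum_intCast_mul_le _ _ _
    _ ≤ ∑ b, |(M.adjugate j b : ℝ)| * distNearestInt (k * y a) := by
        gcongr with b
        exact ha b (Finset.mem_univ b)
    _ ≤ A * distNearestInt (k * y a) := by
        rw [← Finset.sum_mul]
        exact mul_le_mul_of_nonneg_right hrow (distNearestInt_nonneg _)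
    _ = distNearestInt (k * y a) * A := mul_comm _ _

theorem vandermonde_mulVec {d : ℕ} {θ : Fin d → ℝ} (h : DiophantineWith C ν θ) (hC : 0 < C)
    {v : Fin d → ℤ} (hv : Function.Injective v) :
    ∃ C' > 0, DiophantineWith C' ν fun a => ∑ j : Fin d, (v a : ℝ) ^ (j : ℕ) * θ j := by
  obtain ⟨C', hC', hθ'⟩ := h.intMatrix_mulVec hC (det_vandermonde_ne_zero_iff.2 hv)
  refine ⟨C', hC', ?_⟩
  convert hθ' using 2
  simp [mulVec, dotProduct, vandermonde_apply]

end DiophantineWith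

theorem vandermonde_combinations_diophantine_general
    (d : ℕ) (θ : ℕ → ℝ) (C ν : ℝ) (hC : 0 < C)
    (h : ∀ k : ℤ, k ≠ 0 →
      ∃ i, 1 ≤ i ∧ i ≤ d ∧ C * |(k : ℝ)| ^ (-ν) ≤ distNearestInt ((k : ℝ) * θ i))
    (p : ℕ) :
    ∃ C' : ℝ, 0 < C' ∧
      ∀ idx : Fin d → ℕ, (∀ a, 1 ≤ idx a ∧ idx a ≤ p) → Function.Injective idx →
        ∀ k : ℤ, k ≠ 0 →
          ∃ a : Fin d, C' * |(k : ℝ)| ^ (-ν) ≤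
            distNearestInt ((k : ℝ) *
              (∑ j ∈ Finset.range d, ((idx a : ℝ)) ^ j * θ (j + 1))) := by
  have hθ : DiophantineWith C ν fun j : Fin d => θ (j + 1) := fun k hk => by
    obtain ⟨i, hi1, hid, hi⟩ := h k hk
    exact ⟨⟨i - 1, by omega⟩, by simpa [Nat.sub_add_cancel hi1] using hi⟩
  have hnodes : (Set.univ.pi fun _ : Fin d => Set.Iic p).Finite :=
    Set.Finite.pi fun _ => Set.finite_Iic p
  have hev : ∀ᶠ c in 𝓝[>] 0, ∀ idx ∈ Set.univ.pi (fun _ : Fin d => Set.Iic p),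
      Function.Injective idx →
        DiophantineWith c ν fun a => ∑ j : Fin d, ((idx a : ℤ) : ℝ) ^ (j : ℕ) * θ (j + 1) := by
    refine (eventually_all_finite hnodes).2 fun idx _ =>
      eventually_imp_distrib_left.2 fun hinj => ?_
    obtain ⟨C', hC', hθ'⟩ := hθ.vandermonde_mulVec hC (v := fun a => (idx a : ℤ))
      (Nat.cast_injective.comp hinj)
    exact hθ'.eventually_nhdsGT hC'
  obtain ⟨C', hall, hC'⟩ := (hev.and self_mem_nhdsWithin).exists
  refine ⟨C', hC', fun idx hidx hinj k hk => ?_⟩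
  obtain ⟨a, ha⟩ := hall idx (fun a _ => (hidx a).2) hinj k hk
  refine ⟨a, ?_⟩
  rw [← Fin.sum_univ_eq_sum_range (fun j => (idx a : ℝ) ^ j * θ (j + 1))]
  exact_mod_cast ha

/-- If `(θ₁,…,θ_d)` satisfies the simultaneous Diophantine condition, then for any `p ≥ d`
the numbers `θ̃_s = θ₁ + sθ₂ + … + s^{d-1}θ_d`, `s = 1,…,p`, are such that every `d`-tuple
with distinct indices satisfies the same simultaneous Diophantine condition with some
constant `C' > 0`. -/
theorem vandermonde_combinations_diophantine
    (d : ℕ) (hd : 2 ≤ d) (θ : ℕ → ℝ) (C ν : ℝ) (hC : 0 < C) (hν : 0 < ν)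
    (h : ∀ k : ℤ, k ≠ 0 →
      ∃ i, 1 ≤ i ∧ i ≤ d ∧ C * |(k : ℝ)| ^ (-ν) ≤ distNearestInt ((k : ℝ) * θ i))
    (p : ℕ) (hp : d ≤ p) :
    ∃ C' : ℝ, 0 < C' ∧
      ∀ idx : Fin d → ℕ, (∀ a, 1 ≤ idx a ∧ idx a ≤ p) → Function.Injective idx →
        ∀ k : ℤ, k ≠ 0 →
          ∃ a : Fin d, C' * |(k : ℝ)| ^ (-ν) ≤
            distNearestInt ((k : ℝ) *
              (∑ j ∈ Finset.range d, ((idx a : ℝ)) ^ j * θ (j + 1))) :=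
  vandermonde_combinations_diophantine_general d θ C ν hC h p
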